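/- Rademacher complexity of the truncated ℓ₁-distance class (established in the proof of Lemma D.2). Let H and G be nonempty classes of functions X → [0,1]^k, and fix points x_1, …, x_n ∈ X. Then the empirical Rademacher complexity satisfies Rad_n({x ↦ min{1, ‖g(x) − h(x)‖₁} : h ∈ H, g ∈ G}) ≤ Σ_{y'=1}^k (Rad_n(H|_{y'}) + Rad_n(G|_{y'})); the proof peels off the 1-Lipschitz maps r ↦ min{1, r} and r ↦ |r| (on [−1, 1]) via Lipschitz contraction, splits the ℓ₁ norm over coordinates, and uses the sign symmetry of the Rademacher variables. -/

import Mathlib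

/-- Empirical Rademacher complexity of a class `F` of real-valued functions on `Z`,
computed on the fixed points `z_1, …, z_n`:
`Rad_n(F) = E_ε [ sup_{f ∈ F} (1/n) Σ_i ε_i f(z_i) ]`, the expectation being the
average over all `2^n` sign vectors `ε ∈ {−1,+1}^n`. -/
noncomputable def rademacher {Z : Type*} (n : ℕ) (F : Set (Z → ℝ)) (z : Fin n → Z) : ℝ :=
  ((2 : ℝ) ^ n)⁻¹ * ∑ ε : Fin n → Bool,
    sSup ((fun f => (n : ℝ)⁻¹ * ∑ i, (if ε i then (1 : ℝ) else -1) * f (z i)) '' F)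

/-- The coordinate restriction `H|_j = {x ↦ h(x)_j : h ∈ H}` of a class of
`ℝ^k`-valued functions. -/
def coordClass {X : Type*} {k : ℕ} (H : Set (X → Fin k → ℝ)) (j : Fin k) :
    Set (X → ℝ) := (fun h => fun x => h x j) '' H

namespace RadAux


lemma sSup_add_sSup_le {Xs Ys : Set ℝ} (hX : Xs.Nonempty) (hY : Ys.Nonempty) {c : ℝ}
    (h : ∀ x ∈ Xs, ∀ y ∈ Ys, x + y ≤ c) : sSup Xs + sSup Ys ≤ c := by
  have h1 : sSup Xs ≤ c - sSup Ys := by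
    refine csSup_le hX (fun x hx => ?_)
    have : sSup Ys ≤ c - x := csSup_le hY (fun y hy => by linarith [h x hx y hy])
    linarith
  linarith

variable {X : Type*} {n : ℕ}

noncomputable def sg (ε : Fin n → Bool) (i : Fin n) : ℝ := if ε i then 1 else -1

lemma abs_sg (ε : Fin n → Bool) (i : Fin n) : |sg ε i| = 1 := by
  unfold sg; split <;> simp

noncomputable def TT (φ : ℝ → ℝ) (A : Finset (Fin n)) (ε : Fin n → Bool) (v : Fin n → ℝ) : ℝ :=
  ∑ i, (n : ℝ)⁻¹ * sg ε i * (if i ∈ A then φ (v i) else v i)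

def fl (j : Fin n) (ε : Fin n → Bool) : Fin n → Bool := Function.update ε j (!ε j)

lemma fl_invol (j : Fin n) : Function.Involutive (fl (n := n) j) := by
  intro ε; funext i
  by_cases h : i = j
  · subst h; simp [fl]
  · simp [fl, Function.update_of_ne h]

lemma sg_fl_same (ε : Fin n → Bool) (j : Fin n) : sg (fl j ε) j = - sg ε j := by
  simp only [sg, fl, Function.update_self]
  cases ε j <;> simp

lemma sg_fl_ne (ε : Fin n → Bool) {i j : Fin n} (h : i ≠ j) : sg (fl j ε) i = sg ε i := by
  simp [sg, fl, Function.update_of_ne h]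

section contraction

variable {S : Set (Fin n → ℝ)} {C : ℝ} {φ : ℝ → ℝ}

lemma TT_bdd (hC0 : 0 ≤ C) (hC : ∀ v ∈ S, ∀ i, |v i| ≤ C)
    (hφ : ∀ a b : ℝ, |φ a - φ b| ≤ |a - b|) (A : Finset (Fin n)) (ε : Fin n → Bool) :
    BddAbove ((TT φ A ε) '' S) := by
  refine ⟨(n : ℝ) * ((n : ℝ)⁻¹ * (|φ 0| + C)), ?_⟩
  rintro _ ⟨v, hv, rfl⟩
  calc TT φ A ε v ≤ |TT φ A ε v| := le_abs_self _
    _ ≤ ∑ i : Fin n, |(n : ℝ)⁻¹ * sg ε i * (if i ∈ A then φ (v i) else v i)| :=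
        Finset.abs_sum_le_sum_abs _ _
    _ ≤ ∑ _i : Fin n, (n : ℝ)⁻¹ * (|φ 0| + C) := by
        refine Finset.sum_le_sum fun i _ => ?_
        rw [abs_mul, abs_mul, abs_sg, mul_one]
        have h1 : |v i| ≤ C := hC v hv i
        have h2 : |φ (v i)| ≤ |φ 0| + C := by
          have t1 := abs_sub_abs_le_abs_sub (φ (v i)) (φ 0)
          have t2 := hφ (v i) 0
          rw [sub_zero] at t2
          linarith
        have habs : |(if i ∈ A then φ (v i) else v i)| ≤ |φ 0| + C := by
          split
          · exact h2
          · linarith [abs_nonneg (φ 0)]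
        have hn : |(n : ℝ)⁻¹| = (n : ℝ)⁻¹ := abs_of_nonneg (by positivity)
        rw [hn]
        exact mul_le_mul_of_nonneg_left habs (by positivity)
    _ = (n : ℝ) * ((n : ℝ)⁻¹ * (|φ 0| + C)) := by
        rw [Finset.sum_const, Finset.card_univ, Fintype.card_fin, nsmul_eq_mul]

lemma pair_step (hS : S.Nonempty) (hC0 : 0 ≤ C) (hC : ∀ v ∈ S, ∀ i, |v i| ≤ C)
    (hφ : ∀ a b : ℝ, |φ a - φ b| ≤ |a - b|) {j : Fin n} {A : Finset (Fin n)} (hj : j ∉ A)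
    (ε : Fin n → Bool) :
    sSup (TT φ (insert j A) ε '' S) + sSup (TT φ (insert j A) (fl j ε) '' S)
      ≤ sSup (TT φ A ε '' S) + sSup (TT φ A (fl j ε) '' S) := by
  set s : ℝ := (n : ℝ)⁻¹ * sg ε j with hs
  set a : (Fin n → ℝ) → ℝ :=
    fun v => ∑ i ∈ ({j}ᶜ : Finset (Fin n)), (n : ℝ)⁻¹ * sg ε i * (if i ∈ A then φ (v i) else v i)
    with ha
  have hrest : ∀ (B : Finset (Fin n)) (v : Fin n → ℝ),
      ∑ i ∈ ({j}ᶜ : Finset (Fin n)), (n : ℝ)⁻¹ * sg (fl j ε) i * (if i ∈ B then φ (v i) else v i)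
      = ∑ i ∈ ({j}ᶜ : Finset (Fin n)), (n : ℝ)⁻¹ * sg ε i * (if i ∈ B then φ (v i) else v i) := by
    intro B v
    refine Finset.sum_congr rfl fun i hi => ?_
    have hij : i ≠ j := by simpa using hi
    rw [sg_fl_ne ε hij]
  have hresteq : ∀ (εx : Fin n → Bool) (v : Fin n → ℝ),
      ∑ i ∈ ({j}ᶜ : Finset (Fin n)), (n : ℝ)⁻¹ * sg εx i * (if i ∈ insert j A then φ (v i) else v i)
      = ∑ i ∈ ({j}ᶜ : Finset (Fin n)), (n : ℝ)⁻¹ * sg εx i * (if i ∈ A then φ (v i) else v i) := by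
    intro εx v
    refine Finset.sum_congr rfl fun i hi => ?_
    have hij : i ≠ j := by simpa using hi
    simp [Finset.mem_insert, hij]
  have h1 : ∀ v, TT φ (insert j A) ε v = a v + s * φ (v j) := by
    intro v
    rw [TT, Fintype.sum_eq_add_sum_compl j, if_pos (Finset.mem_insert_self j A), hresteq, ha, hs]
    ring
  have h2 : ∀ v, TT φ (insert j A) (fl j ε) v = a v - s * φ (v j) := by
    intro v
    rw [TT, Fintype.sum_eq_add_sum_compl j, if_pos (Finset.mem_insert_self j A),
      sg_fl_same, hrest, hresteq, ha, hs]
    ring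
  have h3 : ∀ v, TT φ A ε v = a v + s * v j := by
    intro v
    rw [TT, Fintype.sum_eq_add_sum_compl j, if_neg hj, ha, hs]
    ring
  have h4 : ∀ v, TT φ A (fl j ε) v = a v - s * v j := by
    intro v
    rw [TT, Fintype.sum_eq_add_sum_compl j, if_neg hj, sg_fl_same, hrest, ha, hs]
    ring
  refine sSup_add_sSup_le (hS.image _) (hS.image _) ?_
  rintro _ ⟨u, hu, rfl⟩ _ ⟨w, hw, rfl⟩
  rw [h1, h2]
  have hkey : s * φ (u j) - s * φ (w j) ≤ |s * (u j - w j)| := by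
    calc s * φ (u j) - s * φ (w j) ≤ |s * φ (u j) - s * φ (w j)| := le_abs_self _
      _ = |s| * |φ (u j) - φ (w j)| := by rw [← abs_mul, mul_sub]
      _ ≤ |s| * |u j - w j| := mul_le_mul_of_nonneg_left (hφ _ _) (abs_nonneg _)
      _ = |s * (u j - w j)| := (abs_mul _ _).symm
  have hb1 : TT φ A ε u ≤ sSup (TT φ A ε '' S) :=
    le_csSup (TT_bdd hC0 hC hφ A ε) (Set.mem_image_of_mem _ hu)
  have hb2 : TT φ A ε w ≤ sSup (TT φ A ε '' S) :=
    le_csSup (TT_bdd hC0 hC hφ A ε) (Set.mem_image_of_mem _ hw)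
  have hb3 : TT φ A (fl j ε) u ≤ sSup (TT φ A (fl j ε) '' S) :=
    le_csSup (TT_bdd hC0 hC hφ A (fl j ε)) (Set.mem_image_of_mem _ hu)
  have hb4 : TT φ A (fl j ε) w ≤ sSup (TT φ A (fl j ε) '' S) :=
    le_csSup (TT_bdd hC0 hC hφ A (fl j ε)) (Set.mem_image_of_mem _ hw)
  rw [h3] at hb1 hb2
  rw [h4] at hb3 hb4
  rcases le_total 0 (s * (u j - w j)) with hpos | hneg
  · rw [abs_of_nonneg hpos] at hkey
    nlinarith [hb1, hb4]
  · rw [abs_of_nonpos hneg] at hkey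
    nlinarith [hb2, hb3]

lemma sum_step (hS : S.Nonempty) (hC0 : 0 ≤ C) (hC : ∀ v ∈ S, ∀ i, |v i| ≤ C)
    (hφ : ∀ a b : ℝ, |φ a - φ b| ≤ |a - b|) {j : Fin n} {A : Finset (Fin n)} (hj : j ∉ A) :
    ∑ ε : Fin n → Bool, sSup (TT φ (insert j A) ε '' S)
      ≤ ∑ ε : Fin n → Bool, sSup (TT φ A ε '' S) := by
  have e1 : ∀ (B : Finset (Fin n)),
      ∑ ε : Fin n → Bool, sSup (TT φ B (fl j ε) '' S)
        = ∑ ε : Fin n → Bool, sSup (TT φ B ε '' S) := by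
    intro B
    exact Equiv.sum_comp ((fl_invol j).toPerm _) (fun ε => sSup (TT φ B ε '' S))
  have hsum := Finset.sum_le_sum
    (fun ε (_ : ε ∈ (Finset.univ : Finset (Fin n → Bool))) => pair_step hS hC0 hC hφ hj ε)
  rw [Finset.sum_add_distrib, Finset.sum_add_distrib, e1, e1] at hsum
  linarith

lemma contract_all (hS : S.Nonempty) (hC0 : 0 ≤ C) (hC : ∀ v ∈ S, ∀ i, |v i| ≤ C)
    (hφ : ∀ a b : ℝ, |φ a - φ b| ≤ |a - b|) (A : Finset (Fin n)) :
    ∑ ε : Fin n → Bool, sSup (TT φ A ε '' S)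
      ≤ ∑ ε : Fin n → Bool, sSup (TT φ (∅ : Finset (Fin n)) ε '' S) := by
  induction A using Finset.induction_on with
  | empty => exact le_refl _
  | insert _ _ hj ih => exact (sum_step hS hC0 hC hφ hj).trans ih

end contraction

lemma rad_summand_bdd (F : Set (X → ℝ)) (z : Fin n → X) {C : ℝ}
    (hC : ∀ f ∈ F, ∀ i, |f (z i)| ≤ C) (ε : Fin n → Bool) :
    BddAbove ((fun f => (n : ℝ)⁻¹ * ∑ i, (if ε i then (1 : ℝ) else -1) * f (z i)) '' F) := by
  refine ⟨(n : ℝ)⁻¹ * ((n : ℝ) * C), ?_⟩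
  rintro _ ⟨f, hf, rfl⟩
  refine mul_le_mul_of_nonneg_left ?_ (by positivity)
  calc ∑ i, (if ε i then (1 : ℝ) else -1) * f (z i)
      ≤ |∑ i, (if ε i then (1 : ℝ) else -1) * f (z i)| := le_abs_self _
    _ ≤ ∑ i, |(if ε i then (1 : ℝ) else -1) * f (z i)| := Finset.abs_sum_le_sum_abs _ _
    _ ≤ ∑ _i : Fin n, C := by
        refine Finset.sum_le_sum fun i _ => ?_
        rw [abs_mul]
        have hsg : |(if ε i then (1 : ℝ) else -1)| = 1 := by split <;> simp
        rw [hsg, one_mul]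
        exact hC f hf i
    _ = (n : ℝ) * C := by
        rw [Finset.sum_const, Finset.card_univ, Fintype.card_fin, nsmul_eq_mul]

lemma rad_contract (F : Set (X → ℝ)) (hF : F.Nonempty) (z : Fin n → X) {C : ℝ} (hC0 : 0 ≤ C)
    (hC : ∀ f ∈ F, ∀ i, |f (z i)| ≤ C) {φ : ℝ → ℝ}
    (hφ : ∀ a b : ℝ, |φ a - φ b| ≤ |a - b|) :
    rademacher n ((fun f => fun x => φ (f x)) '' F) z ≤ rademacher n F z := by
  set S : Set (Fin n → ℝ) := (fun f => fun i => f (z i)) '' F with hSdef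
  have hS : S.Nonempty := hF.image _
  have hC' : ∀ v ∈ S, ∀ i, |v i| ≤ C := by rintro _ ⟨f, hf, rfl⟩ i; exact hC f hf i
  unfold rademacher
  refine mul_le_mul_of_nonneg_left ?_ (by positivity)
  have eqL : ∀ ε : Fin n → Bool,
      ((fun f => (n : ℝ)⁻¹ * ∑ i, (if ε i then (1 : ℝ) else -1) * f (z i)) ''
          ((fun f => fun x => φ (f x)) '' F))
        = TT φ Finset.univ ε '' S := by
    intro ε
    rw [Set.image_image, hSdef, Set.image_image]
    refine Set.image_congr' fun f => ?_
    simp only [TT, sg, Finset.mem_univ, if_pos, Finset.mul_sum]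
    exact Finset.sum_congr rfl fun i _ => by ring
  have eqR : ∀ ε : Fin n → Bool,
      ((fun f => (n : ℝ)⁻¹ * ∑ i, (if ε i then (1 : ℝ) else -1) * f (z i)) '' F)
        = TT φ (∅ : Finset (Fin n)) ε '' S := by
    intro ε
    rw [hSdef, Set.image_image]
    refine Set.image_congr' fun f => ?_
    simp only [TT, sg, Finset.notMem_empty, if_false, Finset.mul_sum]
    exact Finset.sum_congr rfl fun i _ => by ring
  calc ∑ ε : Fin n → Bool, sSup ((fun f => (n : ℝ)⁻¹ * ∑ i, (if ε i then (1 : ℝ) else -1) * f (z i)) ''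
          ((fun f => fun x => φ (f x)) '' F))
      = ∑ ε : Fin n → Bool, sSup (TT φ Finset.univ ε '' S) :=
        Finset.sum_congr rfl fun ε _ => by rw [eqL ε]
    _ ≤ ∑ ε : Fin n → Bool, sSup (TT φ (∅ : Finset (Fin n)) ε '' S) :=
        contract_all hS hC0 hC' hφ Finset.univ
    _ = ∑ ε : Fin n → Bool, sSup ((fun f => (n : ℝ)⁻¹ * ∑ i, (if ε i then (1 : ℝ) else -1) * f (z i)) '' F) :=
        (Finset.sum_congr rfl fun ε _ => by rw [eqR ε]).symm

end RadAux

open RadAux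

/-- **Rademacher complexity of the truncated ℓ₁-distance class
(established in the proof of Lemma D.2).**
For nonempty classes `H, G` of functions `X → [0,1]^k` and fixed points
`x_1, …, x_n`,
`Rad_n({x ↦ min{1, ‖g(x) − h(x)‖₁} : h ∈ H, g ∈ G})
  ≤ Σ_{y'=1}^k (Rad_n(H|_{y'}) + Rad_n(G|_{y'}))`. -/
theorem rademacher_truncated_l1_class {X : Type*} {k n : ℕ}
    (H G : Set (X → Fin k → ℝ)) (hHne : H.Nonempty) (hGne : G.Nonempty)
    (hH01 : ∀ h ∈ H, ∀ x j, h x j ∈ Set.Icc (0 : ℝ) 1)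
    (hG01 : ∀ g ∈ G, ∀ x j, g x j ∈ Set.Icc (0 : ℝ) 1)
    (z : Fin n → X) :
    rademacher n {f | ∃ h ∈ H, ∃ g ∈ G, f = fun x => min 1 (∑ j, |g x j - h x j|)} z
      ≤ ∑ y' : Fin k,
          (rademacher n (coordClass H y') z + rademacher n (coordClass G y') z) := by
  classical
  set F2 : Set (X → ℝ) := {f | ∃ h ∈ H, ∃ g ∈ G, f = fun x => ∑ j, |g x j - h x j|} with hF2def
  set D : Fin k → Set (X → ℝ) :=
    fun j => {f | ∃ h ∈ H, ∃ g ∈ G, f = fun x => |g x j - h x j|} with hDdef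
  set E : Fin k → Set (X → ℝ) :=
    fun j => {f | ∃ h ∈ H, ∃ g ∈ G, f = fun x => g x j - h x j} with hEdef
  obtain ⟨h0, hh0⟩ := hHne
  obtain ⟨g0, hg0⟩ := hGne
  -- basic bounds
  have habs1 : ∀ h ∈ H, ∀ g ∈ G, ∀ (x : X) (j : Fin k), |g x j - h x j| ≤ 1 := by
    intro h hh g hg x j
    obtain ⟨h1, h2⟩ := hH01 h hh x j
    obtain ⟨g1, g2⟩ := hG01 g hg x j
    rw [abs_le]; constructor <;> linarith
  have hF2ne : F2.Nonempty := ⟨_, ⟨h0, hh0, g0, hg0, rfl⟩⟩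
  have hF2C : ∀ f ∈ F2, ∀ i, |f (z i)| ≤ (k : ℝ) := by
    rintro f ⟨h, hh, g, hg, rfl⟩ i
    dsimp only
    rw [abs_of_nonneg (Finset.sum_nonneg fun j _ => abs_nonneg _)]
    calc ∑ j, |g (z i) j - h (z i) j| ≤ ∑ _j : Fin k, (1 : ℝ) :=
          Finset.sum_le_sum fun j _ => habs1 h hh g hg (z i) j
      _ = (k : ℝ) := by simp
  -- Step 1 : contraction with min 1 ·
  have hminlip : ∀ a b : ℝ, |min 1 a - min 1 b| ≤ |a - b| := by
    have key : ∀ a b : ℝ, min 1 a - min 1 b ≤ |a - b| := by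
      intro a b
      rcases le_total (1 : ℝ) b with hb | hb
      · rw [min_eq_left hb]
        have := min_le_left 1 a
        have := abs_nonneg (a - b)
        linarith
      · rw [min_eq_right hb]
        have := min_le_right 1 a
        have := le_abs_self (a - b)
        linarith
    intro a b
    rw [abs_sub_le_iff]
    exact ⟨key a b, by simpa [abs_sub_comm] using key b a⟩
  have hF1eq : {f : X → ℝ | ∃ h ∈ H, ∃ g ∈ G, f = fun x => min 1 (∑ j, |g x j - h x j|)}
      = (fun f => fun x => min 1 (f x)) '' F2 := by
    ext f
    constructor
    · rintro ⟨h, hh, g, hg, rfl⟩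
      exact ⟨_, ⟨h, hh, g, hg, rfl⟩, rfl⟩
    · rintro ⟨f', ⟨h, hh, g, hg, rfl⟩, rfl⟩
      exact ⟨h, hh, g, hg, rfl⟩
  have step1 : rademacher n
      {f : X → ℝ | ∃ h ∈ H, ∃ g ∈ G, f = fun x => min 1 (∑ j, |g x j - h x j|)} z
      ≤ rademacher n F2 z := by
    rw [hF1eq]
    exact rad_contract F2 hF2ne z (Nat.cast_nonneg k) hF2C hminlip
  -- bounds for D and E classes
  have hDC : ∀ j : Fin k, ∀ f ∈ D j, ∀ i, |f (z i)| ≤ (1 : ℝ) := by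
    rintro j f ⟨h, hh, g, hg, rfl⟩ i
    simpa [abs_abs] using habs1 h hh g hg (z i) j
  have hEC : ∀ j : Fin k, ∀ f ∈ E j, ∀ i, |f (z i)| ≤ (1 : ℝ) := by
    rintro j f ⟨h, hh, g, hg, rfl⟩ i
    exact habs1 h hh g hg (z i) j
  have hEne : ∀ j : Fin k, (E j).Nonempty := fun j => ⟨_, ⟨h0, hh0, g0, hg0, rfl⟩⟩
  have hDne : ∀ j : Fin k, (D j).Nonempty := fun j => ⟨_, ⟨h0, hh0, g0, hg0, rfl⟩⟩
  -- Step 2 : split sum over coordinates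
  have step2 : rademacher n F2 z ≤ ∑ j : Fin k, rademacher n (D j) z := by
    unfold rademacher
    rw [← Finset.mul_sum]
    refine mul_le_mul_of_nonneg_left ?_ (by positivity)
    rw [Finset.sum_comm]
    refine Finset.sum_le_sum fun ε _ => ?_
    refine csSup_le (hF2ne.image _) ?_
    rintro b ⟨f, hf, rfl⟩
    obtain ⟨h, hh, g, hg, rfl⟩ := hf
    dsimp only
    have e : (n : ℝ)⁻¹ * ∑ i, (if ε i then (1 : ℝ) else -1) * ∑ j, |g (z i) j - h (z i) j|
        = ∑ j, (n : ℝ)⁻¹ * ∑ i, (if ε i then (1 : ℝ) else -1) * |g (z i) j - h (z i) j| := by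
      simp only [Finset.mul_sum]
      rw [Finset.sum_comm]
    rw [e]
    refine Finset.sum_le_sum fun j _ => ?_
    exact le_csSup (rad_summand_bdd (D j) z (hDC j) ε)
      ⟨fun x => |g x j - h x j|, ⟨h, hh, g, hg, rfl⟩, rfl⟩
  -- Step 3 : contraction with abs, coordinatewise
  have step3 : ∀ j : Fin k, rademacher n (D j) z ≤ rademacher n (E j) z := by
    intro j
    have hDeq : D j = (fun f => fun x => |f x|) '' (E j) := by
      ext f
      constructor
      · rintro ⟨h, hh, g, hg, rfl⟩
        exact ⟨_, ⟨h, hh, g, hg, rfl⟩, rfl⟩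
      · rintro ⟨f', ⟨h, hh, g, hg, rfl⟩, rfl⟩
        exact ⟨h, hh, g, hg, rfl⟩
    rw [hDeq]
    exact rad_contract (E j) (hEne j) z zero_le_one (hEC j)
      (fun a b => abs_abs_sub_abs_le_abs_sub a b)
  -- Step 4 : split difference class
  have hHcC : ∀ j : Fin k, ∀ f ∈ coordClass H j, ∀ i, |f (z i)| ≤ (1 : ℝ) := by
    rintro j f ⟨h, hh, rfl⟩ i
    obtain ⟨h1, h2⟩ := hH01 h hh (z i) j
    rw [abs_le]; constructor <;> linarith
  have hGcC : ∀ j : Fin k, ∀ f ∈ coordClass G j, ∀ i, |f (z i)| ≤ (1 : ℝ) := by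
    rintro j f ⟨g, hg, rfl⟩ i
    obtain ⟨h1, h2⟩ := hG01 g hg (z i) j
    rw [abs_le]; constructor <;> linarith
  have step4 : ∀ j : Fin k, rademacher n (E j) z
      ≤ rademacher n (coordClass H j) z + rademacher n (coordClass G j) z := by
    intro j
    unfold rademacher
    rw [← mul_add]
    refine mul_le_mul_of_nonneg_left ?_ (by positivity)
    have flipall : Function.Involutive (fun ε : Fin n → Bool => (fun i => !(ε i))) := by
      intro ε; funext i; simp
    set P : (Fin n → Bool) → ℝ := fun ε =>
      sSup ((fun f => (n : ℝ)⁻¹ * ∑ i, (if ε i then (1 : ℝ) else -1) * f (z i)) ''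
        coordClass H j) with hP
    have e1 : ∑ ε : Fin n → Bool, P (fun i => !(ε i)) = ∑ ε : Fin n → Bool, P ε :=
      Equiv.sum_comp (flipall.toPerm) P
    have per : ∀ ε : Fin n → Bool,
        sSup ((fun f => (n : ℝ)⁻¹ * ∑ i, (if ε i then (1 : ℝ) else -1) * f (z i)) '' (E j))
          ≤ P (fun i => !(ε i)) +
            sSup ((fun f => (n : ℝ)⁻¹ * ∑ i, (if ε i then (1 : ℝ) else -1) * f (z i)) ''
              coordClass G j) := by
      intro ε
      refine csSup_le ((hEne j).image _) ?_
      rintro b ⟨f, hf, rfl⟩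
      obtain ⟨h, hh, g, hg, rfl⟩ := hf
      dsimp only
      have split : (n : ℝ)⁻¹ * ∑ i, (if ε i then (1 : ℝ) else -1) * (g (z i) j - h (z i) j)
          = ((n : ℝ)⁻¹ * ∑ i, (if !(ε i) then (1 : ℝ) else -1) * h (z i) j)
            + ((n : ℝ)⁻¹ * ∑ i, (if ε i then (1 : ℝ) else -1) * g (z i) j) := by
        rw [← mul_add, ← Finset.sum_add_distrib]
        congr 1
        refine Finset.sum_congr rfl fun i _ => ?_
        cases hε : ε i <;> simp <;> ring
      rw [split]
      refine add_le_add ?_ ?_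
      · exact le_csSup (rad_summand_bdd (coordClass H j) z (hHcC j) _)
          ⟨fun x => h x j, ⟨h, hh, rfl⟩, rfl⟩
      · exact le_csSup (rad_summand_bdd (coordClass G j) z (hGcC j) _)
          ⟨fun x => g x j, ⟨g, hg, rfl⟩, rfl⟩
    calc ∑ ε : Fin n → Bool,
          sSup ((fun f => (n : ℝ)⁻¹ * ∑ i, (if ε i then (1 : ℝ) else -1) * f (z i)) '' (E j))
        ≤ ∑ ε : Fin n → Bool, (P (fun i => !(ε i)) +
            sSup ((fun f => (n : ℝ)⁻¹ * ∑ i, (if ε i then (1 : ℝ) else -1) * f (z i)) ''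
              coordClass G j)) := Finset.sum_le_sum fun ε _ => per ε
      _ = ∑ ε : Fin n → Bool, P ε +
            ∑ ε : Fin n → Bool,
              sSup ((fun f => (n : ℝ)⁻¹ * ∑ i, (if ε i then (1 : ℝ) else -1) * f (z i)) ''
                coordClass G j) := by rw [Finset.sum_add_distrib, e1]
  -- assemble
  calc rademacher n {f : X → ℝ | ∃ h ∈ H, ∃ g ∈ G,
          f = fun x => min 1 (∑ j, |g x j - h x j|)} z
      ≤ rademacher n F2 z := step1
    _ ≤ ∑ j : Fin k, rademacher n (D j) z := step2
    _ ≤ ∑ j : Fin k, rademacher n (E j) z := Finset.sum_le_sum fun j _ => step3 j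
    _ ≤ ∑ y' : Fin k,
          (rademacher n (coordClass H y') z + rademacher n (coordClass G y') z) :=
        Finset.sum_le_sum fun j _ => step4 j
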